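/- (Theorem 1(ii): the IRP limiter preserves the invariant region.) Let γ > 1, s₀ ∈ ℝ, ε > 0, let I ⊂ ℝ be a compact interval of positive length, and let w_h : I → ℝ³ be continuous with ρ_h(x) > 0 and p(w_h(x)) > 0 for all x ∈ I. Suppose the average w̄_h ∈ Σ^ε₀ and that ρ_min < ρ̄_h, p_min < p(w̄_h), q_max > q(w̄_h). Define θ₁ = (ρ̄_h − ε)/(ρ̄_h − ρ_min), θ₂ = (p(w̄_h) − ε)/(p(w̄_h) − p_min), θ₃ = (−q(w̄_h))/(q_max − q(w̄_h)), θ = min{1, θ₁, θ₂, θ₃}, and w̃_h(x) = θ·w_h(x) + (1 − θ)·w̄_h. Then w̃_h(x) ∈ Σ^ε for all x ∈ I, i.e., ρ̃_h(x) ≥ ε, p(w̃_h(x)) ≥ ε, and q(w̃_h(x)) ≤ 0. -/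

import Mathlib

open Real MeasureTheory

/-- Pressure of a state `w = (ρ, m, E)` for adiabatic exponent `γ`:
`p(w) = (γ − 1)(E − m²/(2ρ))`. -/
noncomputable def press (γ : ℝ) (w : ℝ × ℝ × ℝ) : ℝ :=
  (γ - 1) * (w.2.2 - w.2.1 ^ 2 / (2 * w.1))

/-- Specific entropy `s(w) = log(p(w)/ρ^γ)`. -/
noncomputable def entr (γ : ℝ) (w : ℝ × ℝ × ℝ) : ℝ :=
  Real.log (press γ w / w.1 ^ γ)

/-- `q(w) = (s₀ − s(w))·ρ`. -/
noncomputable def qf (γ s₀ : ℝ) (w : ℝ × ℝ × ℝ) : ℝ :=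
  (s₀ - entr γ w) * w.1

/-! The density is linear and the pressure is concave in the conserved variables, since the
kinetic energy `m²/(2ρ)` is the perspective `ρ · φ(m/ρ)` of `φ = (·)²/2`. On `{ρ > 0, p > 0}`,
`q = s₀ρ + ρ log(ρ/p) + (γ − 1) ρ log ρ` is convex: `ρ log(ρ/p)` is the perspective of
`t log t`, jointly convex in `(ρ, p)` and decreasing in `p`, and `p` is concave.
For a concave `f` with `m ≤ f` on the cell, `f(θ w + (1 − θ) w̄) ≥ θ m + (1 − θ) f(w̄)`, which is
`≥ ε` as soon as `θ ≤ (f(w̄) − ε)/(f(w̄) − m)`; the `θᵢ` are exactly these thresholds. -/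

open Set

theorem ConvexOn.perspective {E : Type*} [AddCommGroup E] [Module ℝ E] {s : Set E}
    {φ : E → ℝ} (hφ : ConvexOn ℝ s φ) :
    ConvexOn ℝ {z : E × ℝ | 0 < z.2 ∧ z.2⁻¹ • z.1 ∈ s} fun z => z.2 * φ (z.2⁻¹ • z.1) := by
  have step : ∀ ⦃x t x' t' a b : _⦄, 0 < t → t⁻¹ • x ∈ s → 0 < t' → t'⁻¹ • x' ∈ s →
      0 ≤ a → 0 ≤ b → a + b = 1 →
      0 < a * t + b * t' ∧ (a * t + b * t')⁻¹ • (a • x + b • x') ∈ s ∧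
      (a * t + b * t') * φ ((a * t + b * t')⁻¹ • (a • x + b • x'))
        ≤ a * (t * φ (t⁻¹ • x)) + b * (t' * φ (t'⁻¹ • x')) := by
    intro x t x' t' a b ht hx ht' hx' ha hb hab
    have hT : 0 < a * t + b * t' := convex_Ioi (0 : ℝ) ht ht' ha hb hab
    have hw : a * t / (a * t + b * t') + b * t' / (a * t + b * t') = 1 := by
      rw [← add_div, div_self hT.ne']
    have hcomb : (a * t + b * t')⁻¹ • (a • x + b • x')
        = (a * t / (a * t + b * t')) • t⁻¹ • x + (b * t' / (a * t + b * t')) • t'⁻¹ • x' := by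
      simp only [smul_add, smul_smul]
      congr 2 <;> field_simp
    rw [hcomb]
    refine ⟨hT, hφ.1 hx hx' (by positivity) (by positivity) hw, ?_⟩
    calc (a * t + b * t') * φ ((a * t / (a * t + b * t')) • t⁻¹ • x
            + (b * t' / (a * t + b * t')) • t'⁻¹ • x')
        ≤ (a * t + b * t') * ((a * t / (a * t + b * t')) * φ (t⁻¹ • x)
            + (b * t' / (a * t + b * t')) * φ (t'⁻¹ • x')) :=
          mul_le_mul_of_nonneg_left (hφ.2 hx hx' (by positivity) (by positivity) hw) hT.le
      _ = a * (t * φ (t⁻¹ • x)) + b * (t' * φ (t'⁻¹ • x')) := by field_simp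
  refine ⟨fun z hz z' hz' a b ha hb hab => ?_, fun z hz z' hz' a b ha hb hab => ?_⟩
  · obtain ⟨hT, hmem, -⟩ := step hz.1 hz.2 hz'.1 hz'.2 ha hb hab
    exact ⟨by simpa using hT, by simpa using hmem⟩
  · simpa using (step hz.1 hz.2 hz'.1 hz'.2 ha hb hab).2.2

theorem convexOn_sq_div : ConvexOn ℝ (univ ×ˢ Ioi 0) fun z : ℝ × ℝ => z.1 ^ 2 / z.2 := by
  refine ((even_two.convexOn_pow (𝕜 := ℝ)).perspective.subset (fun z hz => ⟨hz.2, trivial⟩)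
    (convex_univ.prod (convex_Ioi 0))).congr fun z _ => ?_
  simp only [smul_eq_mul]
  field_simp

theorem convexOn_mul_log_div :
    ConvexOn ℝ (Ioi 0 ×ˢ Ioi 0) fun z : ℝ × ℝ => z.1 * Real.log (z.1 / z.2) := by
  refine (Real.convexOn_mul_log.perspective.subset
    (fun z hz => ⟨hz.2, smul_nonneg (inv_nonneg.2 (mem_Ioi.1 hz.2).le) (mem_Ioi.1 hz.1).le⟩)
    ((convex_Ioi 0).prod (convex_Ioi 0))).congr fun z hz => ?_
  have hz₂ : z.2 ≠ 0 := ne_of_gt hz.2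
  simp only [smul_eq_mul]
  rw [inv_mul_eq_div]
  field_simp

theorem concaveOn_press {γ : ℝ} (hγ : 1 ≤ γ) : ConcaveOn ℝ {w : ℝ × ℝ × ℝ | 0 < w.1} (press γ) := by
  refine ⟨convex_halfSpace_gt (LinearMap.fst ℝ ℝ (ℝ × ℝ)).isLinear 0,
    fun w hw w' hw' a b ha hb hab => ?_⟩
  have hkin := convexOn_sq_div.2 (x := (w.2.1, w.1)) (y := (w'.2.1, w'.1))
    ⟨trivial, hw⟩ ⟨trivial, hw'⟩ ha hb hab
  simp only [press, Prod.smul_mk, Prod.mk_add_mk, Prod.fst_add, Prod.snd_add, Prod.smul_fst,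
    Prod.smul_snd, smul_eq_mul, div_mul_eq_div_div_swap] at hkin ⊢
  linear_combination (γ - 1) / 2 * hkin

theorem qf_eq {γ : ℝ} (s₀ : ℝ) {w : ℝ × ℝ × ℝ} (hρ : 0 < w.1) (hp : 0 < press γ w) :
    qf γ s₀ w = s₀ * w.1 + w.1 * Real.log (w.1 / press γ w) + (γ - 1) * (w.1 * Real.log w.1) := by
  rw [qf, entr, Real.log_div hp.ne' (Real.rpow_pos_of_pos hρ γ).ne', Real.log_rpow hρ,
    Real.log_div hρ.ne' hp.ne']
  ring

theorem convex_setOf_fst_pos_and_press_pos {γ : ℝ} (hγ : 1 ≤ γ) :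
    Convex ℝ {w : ℝ × ℝ × ℝ | 0 < w.1 ∧ 0 < press γ w} :=
  (concaveOn_press hγ).convex_gt 0

theorem convexOn_qf {γ : ℝ} (s₀ : ℝ) (hγ : 1 ≤ γ) :
    ConvexOn ℝ {w : ℝ × ℝ × ℝ | 0 < w.1 ∧ 0 < press γ w} (qf γ s₀) := by
  refine ⟨convex_setOf_fst_pos_and_press_pos hγ, fun w hw w' hw' a b ha hb hab => ?_⟩
  obtain ⟨hρW, hpW⟩ := convex_setOf_fst_pos_and_press_pos hγ hw hw' ha hb hab
  set W := a • w + b • w'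
  have hρ : W.1 = a * w.1 + b * w'.1 := by simp [W]
  have hp : a * press γ w + b * press γ w' ≤ press γ W :=
    (concaveOn_press hγ).2 hw.1 hw'.1 ha hb hab
  have hp₀ : 0 < a * press γ w + b * press γ w' := convex_Ioi (0 : ℝ) hw.2 hw'.2 ha hb hab
  have hentropy : W.1 * Real.log (W.1 / press γ W)
      ≤ a * (w.1 * Real.log (w.1 / press γ w)) + b * (w'.1 * Real.log (w'.1 / press γ w')) :=
    calc W.1 * Real.log (W.1 / press γ W)
        ≤ W.1 * Real.log (W.1 / (a * press γ w + b * press γ w')) := by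
          gcongr
      _ ≤ _ := by
          have := convexOn_mul_log_div.2 (x := (w.1, press γ w)) (y := (w'.1, press γ w'))
            hw hw' ha hb hab
          simpa [hρ] using this
  have hmul_log : W.1 * Real.log W.1 ≤ a * (w.1 * Real.log w.1) + b * (w'.1 * Real.log w'.1) := by
    simpa [hρ] using Real.convexOn_mul_log.2 (le_of_lt hw.1) (le_of_lt hw'.1) ha hb hab
  rw [qf_eq s₀ hρW hpW, qf_eq s₀ hw.1 hw.2, qf_eq s₀ hw'.1 hw'.2, smul_eq_mul, smul_eq_mul]
  linear_combination s₀ * hρ + hentropy + (γ - 1) * hmul_log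

theorem continuousOn_press (γ : ℝ) : ContinuousOn (press γ) {w : ℝ × ℝ × ℝ | w.1 ≠ 0} := by
  unfold press
  fun_prop (disch := intro w hw; simpa using hw)

theorem continuousOn_qf (γ s₀ : ℝ) :
    ContinuousOn (qf γ s₀) {w : ℝ × ℝ × ℝ | 0 < w.1 ∧ 0 < press γ w} := by
  have hp : ContinuousOn (press γ) {w : ℝ × ℝ × ℝ | 0 < w.1 ∧ 0 < press γ w} :=
    (continuousOn_press γ).mono fun w hw => ne_of_gt hw.1
  have hργ : ContinuousOn (fun w : ℝ × ℝ × ℝ => w.1 ^ γ) {w | 0 < w.1 ∧ 0 < press γ w} :=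
    continuousOn_fst.rpow_const fun w hw => Or.inl hw.1.ne'
  have hργ₀ : ∀ w ∈ {w : ℝ × ℝ × ℝ | 0 < w.1 ∧ 0 < press γ w}, 0 < w.1 ^ γ :=
    fun w hw => Real.rpow_pos_of_pos hw.1 γ
  exact (continuousOn_const.sub ((hp.div hργ fun w hw => (hργ₀ w hw).ne').log
    fun w hw => (div_pos hw.2 (hργ₀ w hw)).ne')).mul continuousOn_fst

theorem ConcaveOn.le_map_of_le_div {E : Type*} [AddCommGroup E] [Module ℝ E] {s : Set E}
    {f : E → ℝ} (hf : ConcaveOn ℝ s f) {x y : E} (hx : x ∈ s) (hy : y ∈ s) {m c θ : ℝ}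
    (hm : m ≤ f x) (hmy : m < f y) (hθ₀ : 0 ≤ θ) (hθ₁ : θ ≤ 1)
    (hθ : θ ≤ (f y - c) / (f y - m)) : c ≤ f (θ • x + (1 - θ) • y) := by
  have hcomb := hf.2 hx hy hθ₀ (sub_nonneg.2 hθ₁) (add_sub_cancel θ 1)
  rw [le_div_iff₀ (sub_pos.2 hmy)] at hθ
  simp only [smul_eq_mul] at hcomb
  nlinarith [mul_le_mul_of_nonneg_left hm hθ₀]

theorem ConvexOn.map_le_of_le_div {E : Type*} [AddCommGroup E] [Module ℝ E] {s : Set E}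
    {f : E → ℝ} (hf : ConvexOn ℝ s f) {x y : E} (hx : x ∈ s) (hy : y ∈ s) {M c θ : ℝ}
    (hM : f x ≤ M) (hMy : f y < M) (hθ₀ : 0 ≤ θ) (hθ₁ : θ ≤ 1)
    (hθ : θ ≤ (c - f y) / (M - f y)) : f (θ • x + (1 - θ) • y) ≤ c := by
  simpa using hf.neg.le_map_of_le_div hx hy (neg_le_neg hM) (neg_lt_neg hMy) hθ₀ hθ₁
    (c := -c) (by simpa only [Pi.neg_apply, neg_sub_neg] using hθ)

theorem IRP_limiter_preserves_invariant_region_general (γ s₀ ε : ℝ) (hγ : 1 < γ) (hε : 0 < ε)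
    (a b : ℝ)
    (wh : ℝ → ℝ × ℝ × ℝ) (hwc : ContinuousOn wh (Set.Icc a b))
    (hρ : ∀ x ∈ Set.Icc a b, 0 < (wh x).1)
    (hp : ∀ x ∈ Set.Icc a b, 0 < press γ (wh x))
    (wbar : ℝ × ℝ × ℝ)
    (ρmin pmin qmax : ℝ)
    (hρmin : ρmin = sInf ((fun x => (wh x).1) '' Set.Icc a b))
    (hpmin : pmin = sInf ((fun x => press γ (wh x)) '' Set.Icc a b))
    (hqmax : qmax = sSup ((fun x => qf γ s₀ (wh x)) '' Set.Icc a b))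
    (hin : ε < wbar.1 ∧ ε < press γ wbar ∧ qf γ s₀ wbar < 0)
    (h1 : ρmin < wbar.1) (h2 : pmin < press γ wbar) (h3 : qf γ s₀ wbar < qmax)
    (θ₁ θ₂ θ₃ θ : ℝ)
    (hθ₁ : θ₁ = (wbar.1 - ε) / (wbar.1 - ρmin))
    (hθ₂ : θ₂ = (press γ wbar - ε) / (press γ wbar - pmin))
    (hθ₃ : θ₃ = (-qf γ s₀ wbar) / (qmax - qf γ s₀ wbar))
    (hθ : θ = min 1 (min θ₁ (min θ₂ θ₃))) :
    ∀ x ∈ Set.Icc a b,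
      ε ≤ (θ • wh x + (1 - θ) • wbar).1 ∧
      ε ≤ press γ (θ • wh x + (1 - θ) • wbar) ∧
      qf γ s₀ (θ • wh x + (1 - θ) • wbar) ≤ 0 := by
  obtain ⟨hρbar, hpbar, hqbar⟩ := hin
  have hbar : 0 < wbar.1 ∧ 0 < press γ wbar := ⟨hε.trans hρbar, hε.trans hpbar⟩
  have hmaps : Set.MapsTo wh (Set.Icc a b) {w | 0 < w.1 ∧ 0 < press γ w} :=
    fun x hx => ⟨hρ x hx, hp x hx⟩
  have hθ_le : θ ≤ 1 ∧ θ ≤ θ₁ ∧ θ ≤ θ₂ ∧ θ ≤ θ₃ := by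
    simp only [hθ, min_le_iff, le_refl, true_or, or_true, and_self]
  have hθ_nonneg : 0 ≤ θ := by
    rw [hθ, hθ₁, hθ₂, hθ₃]
    refine le_min zero_le_one (le_min ?_ (le_min ?_ ?_)) <;> apply div_nonneg <;> linarith
  intro x hx
  refine ⟨?_, ?_, ?_⟩
  · refine ((LinearMap.fst ℝ ℝ (ℝ × ℝ)).concaveOn convex_univ).le_map_of_le_div trivial trivial
      ?_ h1 hθ_nonneg hθ_le.1 (hθ₁ ▸ hθ_le.2.1)
    exact hρmin ▸ csInf_le (isCompact_Icc.bddBelow_image hwc.fst) (Set.mem_image_of_mem _ hx)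
  · refine (concaveOn_press hγ.le).le_map_of_le_div (hρ x hx) hbar.1 ?_ h2 hθ_nonneg hθ_le.1
      (hθ₂ ▸ hθ_le.2.2.1)
    exact hpmin ▸ csInf_le (isCompact_Icc.bddBelow_image
      ((continuousOn_press γ).comp hwc fun y hy => (hρ y hy).ne')) (Set.mem_image_of_mem _ hx)
  · refine (convexOn_qf s₀ hγ.le).map_le_of_le_div (hmaps hx) hbar ?_ h3 hθ_nonneg hθ_le.1
      (by rw [zero_sub]; exact hθ₃ ▸ hθ_le.2.2.2)
    exact hqmax ▸ le_csSup (isCompact_Icc.bddAbove_image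
      ((continuousOn_qf γ s₀).comp hwc hmaps)) (Set.mem_image_of_mem _ hx)

/-- Theorem 1(ii): the IRP limiter preserves the invariant region:
With `w̄_h ∈ Σ^ε₀`, `ρ_min < ρ̄_h`, `p_min < p(w̄_h)`, `q_max > q(w̄_h)`, and
`θ = min{1, θ₁, θ₂, θ₃}`, the limited polynomial `w̃_h(x) = θ·w_h(x) + (1 − θ)·w̄_h`
lies in `Σ^ε` for all `x ∈ I`: `ρ̃_h ≥ ε`, `p(w̃_h) ≥ ε`, `q(w̃_h) ≤ 0`. -/
theorem IRP_limiter_preserves_invariant_region (γ s₀ ε : ℝ) (hγ : 1 < γ) (hε : 0 < ε)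
    (a b : ℝ) (hab : a < b)
    (wh : ℝ → ℝ × ℝ × ℝ) (hwc : ContinuousOn wh (Set.Icc a b))
    (hρ : ∀ x ∈ Set.Icc a b, 0 < (wh x).1)
    (hp : ∀ x ∈ Set.Icc a b, 0 < press γ (wh x))
    (wbar : ℝ × ℝ × ℝ) (hwbar : wbar = (b - a)⁻¹ • ∫ x in a..b, wh x)
    (ρmin pmin qmax : ℝ)
    (hρmin : ρmin = sInf ((fun x => (wh x).1) '' Set.Icc a b))
    (hpmin : pmin = sInf ((fun x => press γ (wh x)) '' Set.Icc a b))
    (hqmax : qmax = sSup ((fun x => qf γ s₀ (wh x)) '' Set.Icc a b))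
    (hin : ε < wbar.1 ∧ ε < press γ wbar ∧ qf γ s₀ wbar < 0)
    (h1 : ρmin < wbar.1) (h2 : pmin < press γ wbar) (h3 : qf γ s₀ wbar < qmax)
    (θ₁ θ₂ θ₃ θ : ℝ)
    (hθ₁ : θ₁ = (wbar.1 - ε) / (wbar.1 - ρmin))
    (hθ₂ : θ₂ = (press γ wbar - ε) / (press γ wbar - pmin))
    (hθ₃ : θ₃ = (-qf γ s₀ wbar) / (qmax - qf γ s₀ wbar))
    (hθ : θ = min 1 (min θ₁ (min θ₂ θ₃))) :
    ∀ x ∈ Set.Icc a b,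
      ε ≤ (θ • wh x + (1 - θ) • wbar).1 ∧
      ε ≤ press γ (θ • wh x + (1 - θ) • wbar) ∧
      qf γ s₀ (θ • wh x + (1 - θ) • wbar) ≤ 0 :=
  IRP_limiter_preserves_invariant_region_general γ s₀ ε hγ hε a b wh hwc hρ hp wbar ρmin pmin qmax
    hρmin hpmin hqmax hin h1 h2 h3 θ₁ θ₂ θ₃ θ hθ₁ hθ₂ hθ₃ hθ
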